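/- arXiv:1502.03537 — 2 statements merged into one kernel-verified Lean document; each statement's English description precedes it below -/
import Mathlib

section
/- Let E be a real inner product space and f : E → ℝ differentiable with gradient ∇f satisfying ‖∇f(x) − ∇f(y)‖ ≤ M ‖x − y‖ for all x, y ∈ E, and f(x) ≥ f* for all x ∈ E. Let W¹ ∈ E, let γ^k > 0 and G^k ∈ E for k = 1, …, N, define W^{k+1} = W^k − γ^k G^k and δ^k = G^k − ∇f(W^k). Then Σ_{k=1}^{N} (γ^k − (M/2)(γ^k)²) ‖∇f(W^k)‖² ≤ f(W¹) − f* − Σ_{k=1}^{N} (γ^k − M (γ^k)²) ⟨∇f(W^k), δ^k⟩ + (M/2) Σ_{k=1}^{N} (γ^k)² ‖δ^k‖². -/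
open Finset
open scoped RealInnerProductSpace

theorem quad_upper
    {E : Type*} [NormedAddCommGroup E] [InnerProductSpace ℝ E]
    (f : E → ℝ) (g : E → E)
    (hg : ∀ x : E, HasFDerivAt f (innerSL ℝ (g x)) x)
    (M : ℝ) (hM : 0 ≤ M)
    (hlip : ∀ x y : E, ‖g x - g y‖ ≤ M * ‖x - y‖)
    (x y : E) :
    f y ≤ f x + ⟪g x, y - x⟫ + M / 2 * ‖y - x‖ ^ 2 := by
  set v := y - x with hv
  set ψ : ℝ → ℝ := fun t => f (x + t • v) - t * ⟪g x, v⟫ - M / 2 * t ^ 2 * ‖v‖ ^ 2 with hψ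
  have hder : ∀ t : ℝ, HasDerivAt ψ (⟪g (x + t • v), v⟫ - ⟪g x, v⟫ - M * t * ‖v‖ ^ 2) t := by
    intro t
    have hc : HasDerivAt (fun t : ℝ => x + t • v) v t := by
      simpa using ((hasDerivAt_id t).smul_const v).const_add x
    have h1 : HasDerivAt (fun t : ℝ => f (x + t • v)) (⟪g (x + t • v), v⟫) t := by
      have h := (hg (x + t • v)).comp_hasDerivAt t hc
      simp at h
      exact h
    have h2 : HasDerivAt (fun t : ℝ => t * ⟪g x, v⟫) (⟪g x, v⟫) t := by
      simpa using (hasDerivAt_id t).mul_const (⟪g x, v⟫)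
    have h3 : HasDerivAt (fun t : ℝ => M / 2 * t ^ 2 * ‖v‖ ^ 2) (M * t * ‖v‖ ^ 2) t := by
      have h := ((hasDerivAt_pow 2 t).const_mul (M / 2)).mul_const (‖v‖ ^ 2)
      refine h.congr_deriv ?_
      push_cast
      ring
    exact (h1.sub h2).sub h3
  have hanti : AntitoneOn ψ (Set.Icc (0:ℝ) 1) := by
    apply antitoneOn_of_deriv_nonpos (convex_Icc 0 1)
    · exact fun t _ => ((hder t).continuousAt).continuousWithinAt
    · exact fun t _ => ((hder t).differentiableAt).differentiableWithinAt
    · intro t ht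
      rw [interior_Icc] at ht
      rw [(hder t).deriv]
      have h1 : ⟪g (x + t • v) - g x, v⟫ ≤ M * t * ‖v‖ ^ 2 := by
        calc ⟪g (x + t • v) - g x, v⟫ ≤ ‖g (x + t • v) - g x‖ * ‖v‖ := real_inner_le_norm _ _
          _ ≤ M * ‖x + t • v - x‖ * ‖v‖ := by
              exact mul_le_mul_of_nonneg_right (hlip _ _) (norm_nonneg _)
          _ = M * (|t| * ‖v‖) * ‖v‖ := by rw [add_sub_cancel_left, norm_smul, Real.norm_eq_abs]
          _ = M * t * ‖v‖ ^ 2 := by rw [abs_of_pos ht.1]; ring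
      have := inner_sub_left (𝕜 := ℝ) (g (x + t • v)) (g x) v
      linarith [h1, this.symm ▸ h1]
  have h01 := hanti (Set.mem_Icc.mpr ⟨le_refl 0, zero_le_one⟩) (Set.mem_Icc.mpr ⟨zero_le_one, le_refl 1⟩) zero_le_one
  simp only [hψ, zero_smul, add_zero, one_smul, zero_mul, zero_pow, mul_zero, sub_zero, one_pow, mul_one, one_mul] at h01
  have : x + v = y := by rw [hv]; abel
  rw [this] at h01
  linarith

/-- Telescoped deterministic inequality (proof of Lemma 3.2, equation (sumineq1)):
if `f : E → ℝ` has `M`-Lipschitz gradient `g` and is bounded below by `fstar`, then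
for the iterates `W (k+1) = W k - γ k • G k` with `δ k = G k - g (W k)`,
`∑_{k=1}^N (γ k - (M/2)(γ k)²)‖g (W k)‖² ≤ f (W 1) - fstar
  - ∑_{k=1}^N (γ k - M (γ k)²)⟪g (W k), δ k⟫ + (M/2)∑_{k=1}^N (γ k)²‖δ k‖²`. -/
theorem telescoped_descent
    {E : Type*} [NormedAddCommGroup E] [InnerProductSpace ℝ E]
    (f : E → ℝ) (g : E → E)
    (hg : ∀ x : E, HasFDerivAt f (innerSL ℝ (g x)) x)
    (M : ℝ) (hM : 0 < M)
    (hlip : ∀ x y : E, ‖g x - g y‖ ≤ M * ‖x - y‖)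
    (fstar : ℝ) (hbound : ∀ x : E, fstar ≤ f x)
    (N : ℕ) (hN : 1 ≤ N)
    (W G : ℕ → E) (γ : ℕ → ℝ) (hγpos : ∀ k, 1 ≤ k → 0 < γ k)
    (hupd : ∀ k, 1 ≤ k → W (k + 1) = W k - γ k • G k) :
    ∑ k ∈ Finset.Icc 1 N, (γ k - M / 2 * (γ k) ^ 2) * ‖g (W k)‖ ^ 2 ≤
      f (W 1) - fstar
        - ∑ k ∈ Finset.Icc 1 N, (γ k - M * (γ k) ^ 2) * ⟪g (W k), G k - g (W k)⟫
        + M / 2 * ∑ k ∈ Finset.Icc 1 N, (γ k) ^ 2 * ‖G k - g (W k)‖ ^ 2 := by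
  have step : ∀ k, 1 ≤ k →
      f (W (k + 1)) ≤ f (W k) - (γ k - M / 2 * (γ k) ^ 2) * ‖g (W k)‖ ^ 2
        - (γ k - M * (γ k) ^ 2) * ⟪g (W k), G k - g (W k)⟫
        + M / 2 * ((γ k) ^ 2 * ‖G k - g (W k)‖ ^ 2) := by
    intro k hk
    have h := quad_upper f g hg M hM.le hlip (W k) (W (k + 1))
    rw [hupd k hk] at h
    have e1 : W k - γ k • G k - W k = -(γ k • G k) := by abel
    rw [e1, inner_neg_right, real_inner_smul_right, norm_neg, norm_smul, mul_pow,
      Real.norm_eq_abs, sq_abs] at h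
    have hG : G k = g (W k) + (G k - g (W k)) := by abel
    have hin : ⟪g (W k), G k⟫ = ‖g (W k)‖ ^ 2 + ⟪g (W k), G k - g (W k)⟫ := by
      nth_rewrite 1 [hG]
      rw [inner_add_right, real_inner_self_eq_norm_sq]
    have hnorm : ‖G k‖ ^ 2 = ‖g (W k)‖ ^ 2 + 2 * ⟪g (W k), G k - g (W k)⟫
        + ‖G k - g (W k)‖ ^ 2 := by
      nth_rewrite 1 [hG]
      rw [norm_add_sq_real]
    rw [hin, hnorm] at h
    rw [hupd k hk]
    exact h.trans (le_of_eq (by ring))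
  have key : ∀ n : ℕ,
      ∑ k ∈ Finset.Icc 1 n, (γ k - M / 2 * (γ k) ^ 2) * ‖g (W k)‖ ^ 2 ≤
        f (W 1) - f (W (n + 1))
          - ∑ k ∈ Finset.Icc 1 n, (γ k - M * (γ k) ^ 2) * ⟪g (W k), G k - g (W k)⟫
          + M / 2 * ∑ k ∈ Finset.Icc 1 n, (γ k) ^ 2 * ‖G k - g (W k)‖ ^ 2 := by
    intro n
    induction n with
    | zero => simp
    | succ n ih =>
      rw [Finset.sum_Icc_succ_top (Nat.le_add_left 1 n),
        Finset.sum_Icc_succ_top (Nat.le_add_left 1 n),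
        Finset.sum_Icc_succ_top (Nat.le_add_left 1 n)]
      have hstep := step (n + 1) (Nat.le_add_left 1 n)
      linarith
  have hb := hbound (W (N + 1))
  have := key N
  linarith
end

section
/- Let D_f ≥ 0 and c ≥ 0 be real constants, and let (γ^k)_{k≥1} be a positive nonincreasing sequence (γ^{k+1} ≤ γ^k for all k). Then the sequence N ↦ (D_f + c Σ_{k=1}^{N} (γ^k)²) / (Σ_{k=1}^{N} γ^k) is nonincreasing in N. -/
open Finset

/-- Monotonicity of the RSG upper bound (Lemma 3.3, monotonicity part):
for nonnegative constants `Df`, `c` and a positive nonincreasing stepsize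
sequence `γ`, the ratio `(Df + c * ∑_{k=1}^N (γ k)^2) / (∑_{k=1}^N γ k)`
is nonincreasing in `N`. -/
theorem expected_gradient_bound_antitone
    (Df c : ℝ) (hDf : 0 ≤ Df) (hc : 0 ≤ c)
    (γ : ℕ → ℝ) (hγpos : ∀ k, 0 < γ k) (hγmono : ∀ k, γ (k + 1) ≤ γ k) :
    ∀ M N : ℕ, 1 ≤ M → M ≤ N →
      (Df + c * ∑ k ∈ Finset.Icc 1 N, (γ k) ^ 2) / (∑ k ∈ Finset.Icc 1 N, γ k) ≤
        (Df + c * ∑ k ∈ Finset.Icc 1 M, (γ k) ^ 2) / (∑ k ∈ Finset.Icc 1 M, γ k) := by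
  have hanti : ∀ a b : ℕ, a ≤ b → γ b ≤ γ a := by
    intro a b hab
    induction b with
    | zero => simp_all
    | succ n ih =>
      rcases Nat.lt_or_ge a (n + 1) with h | h
      · exact (hγmono n).trans (ih (Nat.lt_succ_iff.mp h))
      · exact le_of_eq (congrArg γ (le_antisymm h hab))
  have hSpos : ∀ N : ℕ, 1 ≤ N → 0 < ∑ k ∈ Finset.Icc 1 N, γ k := by
    intro N hN
    apply Finset.sum_pos (fun k _ => hγpos k)
    exact ⟨1, by simp [hN]⟩
  intro M N hM hMN
  induction N with
  | zero => omega
  | succ n ih =>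
    rcases Nat.lt_or_ge M (n + 1) with h | h
    · have hMn : M ≤ n := Nat.lt_succ_iff.mp h
      refine le_trans ?_ (ih hMn)
      have h1n : 1 ≤ n := hM.trans hMn
      -- one-step inequality from n to n+1
      have hS1 := hSpos n h1n
      have hS1' := hSpos (n + 1) (by omega)
      rw [div_le_div_iff₀ hS1' hS1]
      have hsum : ∑ k ∈ Finset.Icc 1 (n + 1), γ k
          = (∑ k ∈ Finset.Icc 1 n, γ k) + γ (n + 1) := by
        rw [Finset.sum_Icc_succ_top (by omega)]
      have hsum2 : ∑ k ∈ Finset.Icc 1 (n + 1), (γ k) ^ 2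
          = (∑ k ∈ Finset.Icc 1 n, (γ k) ^ 2) + γ (n + 1) ^ 2 := by
        rw [Finset.sum_Icc_succ_top (by omega)]
      rw [hsum, hsum2]
      have key : γ (n + 1) * ∑ k ∈ Finset.Icc 1 n, γ k
          ≤ ∑ k ∈ Finset.Icc 1 n, (γ k) ^ 2 := by
        rw [Finset.mul_sum]
        apply Finset.sum_le_sum
        intro k hk
        have hk1 : k ≤ n := (Finset.mem_Icc.mp hk).2
        have := hanti k (n + 1) (by omega)
        have hkpos := (hγpos k).le
        nlinarith
      have hγp := hγpos (n + 1)
      nlinarith [mul_le_mul_of_nonneg_left key hc]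
    · have : M = n + 1 := le_antisymm hMN h
      subst this
      exact le_refl _
end
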